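/- arXiv:2410.08364 — 2 statements merged into one kernel-verified Lean document; each statement's English description precedes it below -/
import Mathlib

section
/- Let a₁,…,a_N, b ∈ ℝᵐ and p₁,…,p_N, s ∈ ℝ. Suppose for all β₁,…,β_N ≥ 0 with Σᵢ βᵢ aᵢ = b it holds that s + Σᵢ βᵢ (-pᵢ) ≥ 0 (i.e. ζ₂ ≥ 0), and the system {aᵢᵀ u ≥ pᵢ} is feasible. Then there exists u ∈ ℝᵐ satisfying aᵢᵀ u ≥ pᵢ for all i and bᵀ u ≤ s. -/
/-!
Farkas' lemma is proved by induction on the number of generators: if a vector `u` separating `b`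
from the first `N` generators fails on the last one `c`, project everything onto `u⟂` along `c`;
a separator `w` of the projected problem, corrected to `w - (⟪c, w⟫ / ⟪c, u⟫) • u`, separates
`b` from all generators. Homogenizing in `V × ℝ` gives the inhomogeneous alternative: the system
`q i ≤ ⟪c i, u⟫` is solvable unless some nonnegative combination of the `c i` vanishes while the
same combination of the `q i` is positive. For the system `a i, -b` with bounds `p i, -s`, such a
certificate with weight `μ` on `-b` is excluded by feasibility of the `a i`-system if `μ = 0`, and
by the hypothesis on nonnegative representations of `b`, after dividing by `μ`, if `μ > 0`.
-/

open Finset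
open scoped RealInnerProductSpace

section Farkas

variable {V : Type*} [NormedAddCommGroup V] [InnerProductSpace ℝ V]

theorem sum_mul_le_inner_sum_smul {ι : Type*} [Fintype ι] {a : ι → V} {p β : ι → ℝ} {u : V}
    (hu : ∀ i, p i ≤ ⟪a i, u⟫) (hβ : ∀ i, 0 ≤ β i) : ∑ i, β i * p i ≤ ⟪∑ i, β i • a i, u⟫ := by
  rw [sum_inner]
  exact sum_le_sum fun i _ => by
    rw [real_inner_smul_left]; exact mul_le_mul_of_nonneg_left (hu i) (hβ i)

/-- The projection onto the hyperplane `⟪·, u⟫ = 0` along `c` (when `⟪c, u⟫ ≠ 0`). -/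
noncomputable def obliqueProj (c u : V) : V →ₗ[ℝ] V :=
  LinearMap.id - ((innerₗ V).flip u).smulRight (⟪c, u⟫⁻¹ • c)

lemma obliqueProj_apply (c u x : V) : obliqueProj c u x = x - (⟪x, u⟫ / ⟪c, u⟫) • c := by
  simp [obliqueProj, smul_smul, div_eq_mul_inv, real_inner_comm]

lemma inner_obliqueProj_left (c u x w : V) :
    ⟪obliqueProj c u x, w⟫ = ⟪x, w - (⟪c, w⟫ / ⟪c, u⟫) • u⟫ := by
  simp only [obliqueProj_apply, inner_sub_left, inner_sub_right, real_inner_smul_left,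
    real_inner_smul_right]
  ring

lemma inner_sub_div_smul_self {c u : V} (hcu : ⟪c, u⟫ ≠ 0) (w : V) :
    ⟪c, w - (⟪c, w⟫ / ⟪c, u⟫) • u⟫ = 0 := by
  rw [inner_sub_right, real_inner_smul_right, div_mul_cancel₀ _ hcu, sub_self]

lemma exists_nonneg_sum_smul_castSucc_add {N : ℕ} {a : Fin (N + 1) → V} {b : V}
    {β : Fin N → ℝ} {γ : ℝ} (hβ : ∀ i, 0 ≤ β i) (hγ : 0 ≤ γ)
    (h : ∑ i, β i • a i.castSucc + γ • a (Fin.last N) = b) :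
    ∃ β' : Fin (N + 1) → ℝ, (∀ i, 0 ≤ β' i) ∧ ∑ i, β' i • a i = b :=
  ⟨Fin.snoc β γ, Fin.lastCases (by simpa) (by simpa), by simpa [Fin.sum_univ_castSucc]⟩

lemma not_exists_nonneg_sum_obliqueProj {N : ℕ} {a : Fin (N + 1) → V} {b u : V}
    (hau : ∀ i : Fin N, 0 ≤ ⟪a i.castSucc, u⟫) (hbu : ⟪b, u⟫ < 0) (hcu : ⟪a (Fin.last N), u⟫ < 0)
    (hb : ¬ ∃ β : Fin (N + 1) → ℝ, (∀ i, 0 ≤ β i) ∧ ∑ i, β i • a i = b) :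
    ¬ ∃ β : Fin N → ℝ, (∀ i, 0 ≤ β i) ∧
      ∑ i : Fin N, β i • obliqueProj (a (Fin.last N)) u (a i.castSucc) =
        obliqueProj (a (Fin.last N)) u b := by
  rintro ⟨β, hβ, hsum⟩
  set c := a (Fin.last N)
  set r := b - ∑ i : Fin N, β i • a i.castSucc
  have hr : obliqueProj c u r = 0 := by
    simp [r, map_sub, map_sum, map_smul, hsum]
  have hru : ⟪r, u⟫ < 0 := by
    have := sum_mul_le_inner_sum_smul (p := 0) hau hβ
    simp only [Pi.zero_apply, mul_zero, sum_const_zero] at this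
    rw [inner_sub_left]
    linarith
  refine hb (exists_nonneg_sum_smul_castSucc_add hβ (div_pos_of_neg_of_neg hru hcu).le ?_)
  rw [obliqueProj_apply, sub_eq_zero] at hr
  rw [← hr, add_sub_cancel]

theorem exists_inner_neg_of_not_exists_nonneg_sum {N : ℕ} (a : Fin N → V) (b : V)
    (hb : ¬ ∃ β : Fin N → ℝ, (∀ i, 0 ≤ β i) ∧ ∑ i, β i • a i = b) :
    ∃ u : V, (∀ i, 0 ≤ ⟪a i, u⟫) ∧ ⟪b, u⟫ < 0 := by
  induction N generalizing b with
  | zero =>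
    have hb0 : b ≠ 0 := fun h => hb ⟨0, fun _ => le_rfl, by simp [h]⟩
    exact ⟨-b, finZeroElim, by simp [hb0]⟩
  | succ N ih =>
    set c := a (Fin.last N)
    obtain ⟨u, hau, hbu⟩ := ih (fun i => a i.castSucc) b fun ⟨β, hβ, h⟩ =>
      hb (exists_nonneg_sum_smul_castSucc_add hβ le_rfl (by simpa using h))
    rcases le_or_gt 0 ⟪c, u⟫ with hcu | hcu
    · exact ⟨u, Fin.lastCases hcu hau, hbu⟩
    obtain ⟨w, haw, hbw⟩ := ih _ _ (not_exists_nonneg_sum_obliqueProj hau hbu hcu hb)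
    refine ⟨w - (⟪c, w⟫ / ⟪c, u⟫) • u, Fin.lastCases (inner_sub_div_smul_self hcu.ne w).ge
      fun i => by simpa only [inner_obliqueProj_left] using haw i, ?_⟩
    simpa only [inner_obliqueProj_left] using hbw

theorem exists_le_inner_of_forall_nonneg_sum_eq_zero {N : ℕ} (c : Fin N → V) (q : Fin N → ℝ)
    (h : ∀ β : Fin N → ℝ, (∀ i, 0 ≤ β i) → ∑ i, β i • c i = 0 → ∑ i, β i * q i ≤ 0) :
    ∃ u : V, ∀ i, q i ≤ ⟪c i, u⟫ := by
  -- Homogenize: a separator `(u, t)` of `(0, -1)` from the `(c i, -q i)` has `t > 0`,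
  -- and `t⁻¹ • u` solves the system.
  let A : Fin N → WithLp 2 (V × ℝ) := fun i => WithLp.toLp 2 (c i, -q i)
  obtain ⟨v, hAv, hBv⟩ := exists_inner_neg_of_not_exists_nonneg_sum A (WithLp.toLp 2 (0, -1))
    fun ⟨β, hβ, hsum⟩ => by
      have hsum' : ∑ i, β i • ((c i, -q i) : V × ℝ) = (0, -1) := by
        simpa [A] using congrArg WithLp.ofLp hsum
      have := h β hβ (by simpa [Prod.fst_sum] using congrArg Prod.fst hsum')
      have : ∑ i, β i * q i = 1 := by simpa [Prod.snd_sum] using congrArg Prod.snd hsum'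
      linarith
  obtain ⟨u, t⟩ := v
  have ht : 0 < t := by simpa [A] using hBv
  refine ⟨t⁻¹ • u, fun i => ?_⟩
  have hi : t * q i ≤ ⟪c i, u⟫ := by simpa [A] using hAv i
  rwa [real_inner_smul_right, le_inv_mul_iff₀ ht]

theorem sum_mul_le_mul_of_sum_smul_eq_smul {ι : Type*} [Fintype ι] {a : ι → V} {b : V} {p β : ι → ℝ} {s μ : ℝ}
    (h1 : ∀ β : ι → ℝ, (∀ i, 0 ≤ β i) → ∑ i, β i • a i = b → s + ∑ i, β i * (-(p i)) ≥ 0)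
    (h2 : ∃ u : V, ∀ i, p i ≤ ⟪a i, u⟫) (hβ : ∀ i, 0 ≤ β i) (hμ : 0 ≤ μ)
    (hsum : ∑ i, β i • a i = μ • b) : ∑ i, β i * p i ≤ μ * s := by
  rcases hμ.eq_or_lt with rfl | hμ
  · obtain ⟨u, hu⟩ := h2
    simpa [hsum] using sum_mul_le_inner_sum_smul hu hβ
  · have hb : ∑ i, (β i / μ) • a i = b := by
      simp_rw [div_eq_inv_mul, ← smul_smul, ← smul_sum, hsum, smul_smul, inv_mul_cancel₀ hμ.ne',
        one_smul]
    have := h1 (fun i => β i / μ) (fun i => div_nonneg (hβ i) hμ.le) hb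
    rw [← div_le_iff₀' hμ, sum_div]
    simp only [mul_neg, sum_neg_distrib, div_mul_eq_mul_div] at this
    linarith

end Farkas

/-- The `ζ₁ = 0, ζ₂ ≥ 0` branch of the CLF-BNCBF compatibility
characterization, via Farkas' lemma. -/
theorem stmt_7 (m N : ℕ) (a : Fin N → EuclideanSpace ℝ (Fin m))
    (b : EuclideanSpace ℝ (Fin m)) (p : Fin N → ℝ) (s : ℝ)
    (h1 : ∀ β : Fin N → ℝ, (∀ i, 0 ≤ β i) → ∑ i, β i • a i = b →
        s + ∑ i, β i * (-(p i)) ≥ 0)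
    (h2 : ∃ u : EuclideanSpace ℝ (Fin m), ∀ i, inner ℝ (a i) u ≥ p i) :
    ∃ u : EuclideanSpace ℝ (Fin m),
      (∀ i, inner ℝ (a i) u ≥ p i) ∧ inner ℝ b u ≤ (s : ℝ) := by
  obtain ⟨u, hu⟩ := exists_le_inner_of_forall_nonneg_sum_eq_zero (Fin.snoc a (-b))
    (Fin.snoc p (-s)) fun β hβ hsum => by
      have hsum' : ∑ i : Fin N, β i.castSucc • a i = β (Fin.last N) • b := by
        simpa [Fin.sum_univ_castSucc, add_neg_eq_zero] using hsum
      simpa [Fin.sum_univ_castSucc] using sum_mul_le_mul_of_sum_smul_eq_smul h1 h2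
        (fun i => hβ i.castSucc) (hβ (Fin.last N)) hsum'
  exact ⟨u, fun i => by simpa using hu i.castSucc, by simpa using hu (Fin.last N)⟩
end

section
/- Let g : ℝⁿ → ℝⁿˣⁿ with g(x) invertible, y ∈ ℝⁿ, and û(x) = -((x-y)ᵀf(x) + ‖x-y‖²)/‖g(x)ᵀ(x-y)‖² · g(x)ᵀ(x-y) for x ≠ y. Then ‖û(x)‖ ≤ ‖g(x)⁻¹‖ (‖f(x)‖ + ‖x-y‖), where ‖g(x)⁻¹‖ is the operator norm. -/
/-! Writing `A = g(x)`, `v = x - y` and `w = Aᵀv`, the controller is `û = -(c / ‖w‖²) w` with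
`c = ⟪v, f x⟫ + ‖v‖²`, so `‖û‖ = |c| / ‖w‖`. Cauchy–Schwarz gives `|c| ≤ ‖v‖ (‖f x‖ + ‖v‖)`, and
`v = (A⁻¹)ᵀ w` gives `‖v‖ ≤ ‖A⁻¹‖ ‖w‖`; dividing by `‖w‖ ≠ 0` yields the bound. -/

open ContinuousLinearMap

section Adjoint

variable {𝕜 E F : Type*} [RCLike 𝕜]
  [NormedAddCommGroup E] [InnerProductSpace 𝕜 E] [CompleteSpace E]
  [NormedAddCommGroup F] [InnerProductSpace 𝕜 F] [CompleteSpace F]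

theorem norm_le_opNorm_mul_norm_adjoint_apply {A : F →L[𝕜] E} {B : E →L[𝕜] F}
    (hAB : A.comp B = ContinuousLinearMap.id 𝕜 E) (v : E) :
    ‖v‖ ≤ ‖B‖ * ‖adjoint A v‖ := by
  have hleft : adjoint B (adjoint A v) = v := by
    rw [← comp_apply, ← adjoint_comp, hAB, adjoint_id, id_apply]
  calc ‖v‖ = ‖adjoint B (adjoint A v)‖ := by rw [hleft]
    _ ≤ ‖adjoint B‖ * ‖adjoint A v‖ := le_opNorm _ _
    _ = ‖B‖ * ‖adjoint A v‖ := by rw [adjoint.norm_map]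

end Adjoint

section Real

variable {E : Type*} [NormedAddCommGroup E] [InnerProductSpace ℝ E]

theorem norm_div_norm_sq_smul (c : ℝ) (w : E) : ‖(c / ‖w‖ ^ 2) • w‖ = |c| / ‖w‖ := by
  rcases eq_or_ne w 0 with rfl | hw
  · simp
  have hw' : ‖w‖ ≠ 0 := norm_ne_zero_iff.mpr hw
  rw [norm_smul, Real.norm_eq_abs, abs_div, abs_of_nonneg (sq_nonneg ‖w‖)]
  field_simp

theorem abs_inner_add_norm_sq_le (v a : E) :
    |inner ℝ v a + ‖v‖ ^ 2| ≤ ‖v‖ * (‖a‖ + ‖v‖) :=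
  calc |inner ℝ v a + ‖v‖ ^ 2| ≤ |inner ℝ v a| + |‖v‖ ^ 2| := abs_add_le _ _
    _ ≤ ‖v‖ * ‖a‖ + ‖v‖ ^ 2 := by
        rw [abs_of_nonneg (sq_nonneg ‖v‖)]
        gcongr
        exact abs_real_inner_le_norm v a
    _ = ‖v‖ * (‖a‖ + ‖v‖) := by ring

end Real

/-- Boundedness estimate `‖û(x)‖ ≤ ‖g(x)⁻¹‖ (‖f(x)‖ + ‖x-y‖)` for the
minimum-norm CLF controller, in terms of the operator norm of `g(x)⁻¹`. -/
theorem stmt_9 (n : ℕ)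
    (f : EuclideanSpace ℝ (Fin n) → EuclideanSpace ℝ (Fin n))
    (g ginv : EuclideanSpace ℝ (Fin n) →
      (EuclideanSpace ℝ (Fin n) →L[ℝ] EuclideanSpace ℝ (Fin n)))
    (hinv : ∀ x, (g x).comp (ginv x) = ContinuousLinearMap.id ℝ _ ∧
      (ginv x).comp (g x) = ContinuousLinearMap.id ℝ _)
    (y : EuclideanSpace ℝ (Fin n))
    (uhat : EuclideanSpace ℝ (Fin n) → EuclideanSpace ℝ (Fin n))
    (huhat : ∀ x, uhat x =
      (-((inner ℝ (x - y) (f x) + ‖x - y‖ ^ 2) /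
          ‖(ContinuousLinearMap.adjoint (g x)) (x - y)‖ ^ 2 : ℝ)) •
        (ContinuousLinearMap.adjoint (g x)) (x - y)) :
    ∀ x, x ≠ y → ‖uhat x‖ ≤ ‖ginv x‖ * (‖f x‖ + ‖x - y‖) := by
  intro x hxy
  set v := x - y
  set w := adjoint (g x) v
  have hvw : ‖v‖ ≤ ‖ginv x‖ * ‖w‖ := norm_le_opNorm_mul_norm_adjoint_apply (hinv x).1 v
  have hw : 0 < ‖w‖ := by
    refine norm_pos_iff.mpr fun hw0 => sub_ne_zero.mpr hxy (norm_le_zero_iff.mp ?_)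
    simpa [hw0] using hvw
  calc ‖uhat x‖ = |inner ℝ v (f x) + ‖v‖ ^ 2| / ‖w‖ := by
        rw [huhat x, neg_smul, norm_neg, norm_div_norm_sq_smul]
    _ ≤ ‖v‖ * (‖f x‖ + ‖v‖) / ‖w‖ := by gcongr; exact abs_inner_add_norm_sq_le v (f x)
    _ ≤ ‖ginv x‖ * ‖w‖ * (‖f x‖ + ‖v‖) / ‖w‖ := by gcongr
    _ = ‖ginv x‖ * (‖f x‖ + ‖v‖) := by field_simp
end
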